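/- The map τ = x + iy ↦ the 2×2 real matrix (x/y, −(x²+y²)/y; 1/y, −x/y) is SL(2,ℝ)-equivariant from the upper half-plane to End(ℝ²): for all g ∈ SL(2,ℝ) and τ ∈ H², M(g·τ) = g M(τ) g⁻¹, where g·τ is the Möbius action. -/

import Mathlib

/-!
`M τ` is the unique real matrix having `(τ, 1)` as an eigenvector with eigenvalue `i`: a real
matrix is determined by its value on a vector with non-real first coordinate. Since `g (τ, 1)`
is the multiple `(cτ + d) (g • τ, 1)`, the conjugate `g M(τ) g⁻¹` has `(g • τ, 1)` as an
`i`-eigenvector, hence equals `M (g • τ)`.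
-/

open Matrix UpperHalfPlane
open scoped MatrixGroups

namespace Matrix

lemma eq_of_map_ofRealHom_mulVec_eq {m : Type*} {A B : Matrix m (Fin 2) ℝ} {w : ℂ}
    (hw : w.im ≠ 0) (h : A.map Complex.ofRealHom *ᵥ ![w, 1] = B.map Complex.ofRealHom *ᵥ ![w, 1]) :
    A = B := by
  ext i j
  have hi := congrFun h i
  simp only [mulVec, dotProduct, Fin.sum_univ_two, map_apply, cons_val_zero, cons_val_one,
    mul_one] at hi
  have h0 : A i 0 = B i 0 := by simpa [hw] using congrArg Complex.im hi
  have h1 : A i 1 = B i 1 := by simpa [h0] using congrArg Complex.re hi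
  fin_cases j
  exacts [h0, h1]

lemma map_conj_mulVec_map_mulVec {R S n : Type*} [CommRing R] [CommRing S] [Fintype n]
    [DecidableEq n] (f : R →+* S) {P : Matrix n n R} (hP : IsUnit P.det) (A : Matrix n n R)
    (v : n → S) : (P * A * P⁻¹).map f *ᵥ (P.map f *ᵥ v) = P.map f *ᵥ (A.map f *ᵥ v) := by
  rw [mulVec_mulVec, mulVec_mulVec, ← Matrix.map_mul, ← Matrix.map_mul, mul_assoc,
    nonsing_inv_mul _ hP, mul_one, Matrix.map_mul]

end Matrix

namespace UpperHalfPlane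

noncomputable def complexStructure (τ : ℍ) : Matrix (Fin 2) (Fin 2) ℝ :=
  !![τ.re / τ.im, -(τ.re ^ 2 + τ.im ^ 2) / τ.im; 1 / τ.im, -τ.re / τ.im]

lemma complexStructure_map_mulVec (τ : ℍ) :
    (complexStructure τ).map Complex.ofRealHom *ᵥ ![(τ : ℂ), 1] = Complex.I • ![(τ : ℂ), 1] := by
  have hτ : (τ : ℂ) = τ.re + τ.im * Complex.I := (Complex.re_add_im _).symm
  have hy : (τ.im : ℂ) ≠ 0 := Complex.ofReal_ne_zero.mpr τ.im_ne_zero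
  ext i
  fin_cases i <;> simp [complexStructure, mulVec, dotProduct, Fin.sum_univ_two] <;> rw [hτ] <;>
    field_simp
  · linear_combination -(τ.im : ℂ) ^ 2 * Complex.I_sq
  · ring

lemma eq_complexStructure_iff {A : Matrix (Fin 2) (Fin 2) ℝ} {τ : ℍ} :
    A = complexStructure τ ↔
      A.map Complex.ofRealHom *ᵥ ![(τ : ℂ), 1] = Complex.I • ![(τ : ℂ), 1] := by
  refine ⟨?_, fun h ↦ eq_of_map_ofRealHom_mulVec_eq τ.im_ne_zero ?_⟩
  · rintro rfl
    exact complexStructure_map_mulVec τ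
  · rw [h, complexStructure_map_mulVec]

lemma map_mulVec_eq_denom_smul (g : SL(2, ℝ)) (τ : ℍ) :
    (g : Matrix (Fin 2) (Fin 2) ℝ).map Complex.ofRealHom *ᵥ ![(τ : ℂ), 1] =
      denom g τ • ![((g • τ : ℍ) : ℂ), 1] := by
  ext i
  fin_cases i
  · have hd : (g 1 0 : ℂ) * τ + g 1 1 ≠ 0 := denom_ne_zero g τ
    simp [mulVec, dotProduct, denom, coe_specialLinearGroup_apply, mul_div_cancel₀ _ hd]
  · simp [mulVec, dotProduct, denom]

end UpperHalfPlane

/-- The map `τ = x + iy ↦ (x/y, -(x²+y²)/y; 1/y, -x/y)` from the upper half-plane to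
`End(ℝ²)` is `SL(2,ℝ)`-equivariant: `M (g • τ) = g * M τ * g⁻¹` for the Möbius action
on `ℍ` and the conjugation action on matrices. -/
theorem M_equivariant
    (Mmap : ℍ → Matrix (Fin 2) (Fin 2) ℝ)
    (hM : ∀ τ : ℍ, Mmap τ =
      !![τ.re / τ.im, -(τ.re ^ 2 + τ.im ^ 2) / τ.im; 1 / τ.im, -τ.re / τ.im])
    (g : Matrix.SpecialLinearGroup (Fin 2) ℝ) (τ : ℍ) :
    Mmap (g • τ) =
      (g : Matrix (Fin 2) (Fin 2) ℝ) * Mmap τ * (g : Matrix (Fin 2) (Fin 2) ℝ)⁻¹ := by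
  obtain rfl : Mmap = complexStructure := funext hM
  have hv : ![((g • τ : ℍ) : ℂ), 1] = (denom g τ)⁻¹ •
      ((g : Matrix (Fin 2) (Fin 2) ℝ).map Complex.ofRealHom *ᵥ ![(τ : ℂ), 1]) := by
    rw [map_mulVec_eq_denom_smul, smul_smul, inv_mul_cancel₀ (denom_ne_zero g τ), one_smul]
  rw [eq_comm, eq_complexStructure_iff, hv, mulVec_smul,
    map_conj_mulVec_map_mulVec _ (by simp), complexStructure_map_mulVec, mulVec_smul, smul_comm]
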